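/- arXiv:2205.10802 — 2 statements merged into one kernel-verified Lean document; each statement's English description precedes it below -/
import Mathlib

section
/- Suppose there exist positive reals γ̄_1,…,γ̄_K and λ_1,…,λ_K such that γ̄_s − γ̄_t − λ_t (u_t(β_s) − u_t(β_t)) ≥ 0 for all s, t ∈ {1,…,K}. Define g(β) = max_{t} { γ̄_t + λ_t (u_t(β) − u_t(β_t)) }. Then g(β_t) = γ̄_t for every t, and for every t and every β with g(β) ≤ γ̄_t, one has u_t(β) ≤ u_t(β_t); i.e., the constraint sequence {g(β) ≤ γ̄_t} rationalizes the data as constrained utility maximization. -/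
/-! The Afriat inequalities say exactly that the `s`-th affine piece of `g` is at most `γ̄_t`
at `β_t`, while the `t`-th piece equals `γ̄_t` there; hence `g(β_t) = γ̄_t`. Conversely
`g(β) ≤ γ̄_t` bounds the `t`-th piece, `γ̄_t + λ_t (u_t(β) − u_t(β_t)) ≤ γ̄_t`, and `λ_t > 0`
gives `u_t(β) ≤ u_t(β_t)`. -/

section AfriatBudget

variable {ι X : Type*} [Fintype ι] [Nonempty ι]
  (u : ι → X → ℝ) (β : ι → X) (γ lam : ι → ℝ)

noncomputable def afriatBudget (x : X) : ℝ :=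
  Finset.univ.sup' Finset.univ_nonempty fun t => γ t + lam t * (u t x - u t (β t))

theorem afriatBudget_apply_eq (hineq : ∀ s t, 0 ≤ γ s - γ t - lam t * (u t (β s) - u t (β t)))
    (t : ι) : afriatBudget u β γ lam (β t) = γ t := by
  apply le_antisymm
  · refine Finset.sup'_le _ _ fun s _ => ?_
    linarith [hineq t s]
  · calc γ t = γ t + lam t * (u t (β t) - u t (β t)) := by ring
      _ ≤ afriatBudget u β γ lam (β t) :=
        Finset.le_sup' (fun s => γ s + lam s * (u s (β t) - u s (β s))) (Finset.mem_univ t)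

theorem le_of_afriatBudget_le (hlam : ∀ t, 0 < lam t) {t : ι} {x : X}
    (hx : afriatBudget u β γ lam x ≤ γ t) : u t x ≤ u t (β t) := by
  have hpiece : γ t + lam t * (u t x - u t (β t)) ≤ afriatBudget u β γ lam x :=
    Finset.le_sup' (fun s => γ s + lam s * (u s x - u s (β s))) (Finset.mem_univ t)
  have : lam t * (u t x - u t (β t)) ≤ 0 := by linarith
  exact sub_nonpos.mp (nonpos_of_mul_nonpos_right this (hlam t))

end AfriatBudget

theorem stmt_1_general {m K : ℕ}
    (u : Fin (K + 1) → (Fin m → ℝ) → ℝ) (β : Fin (K + 1) → Fin m → ℝ)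
    (γ lam : Fin (K + 1) → ℝ)
    (hlam : ∀ t, 0 < lam t)
    (hineq : ∀ s t, 0 ≤ γ s - γ t - lam t * (u t (β s) - u t (β t)))
    (g : (Fin m → ℝ) → ℝ)
    (hg : ∀ x, g x = Finset.univ.sup' Finset.univ_nonempty
      (fun t => γ t + lam t * (u t x - u t (β t)))) :
    (∀ t, g (β t) = γ t) ∧
    (∀ t (x : Fin m → ℝ), g x ≤ γ t → u t x ≤ u t (β t)) := by
  obtain rfl : g = afriatBudget u β γ lam := funext hg
  exact ⟨afriatBudget_apply_eq u β γ lam hineq,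
    fun _ _ => le_of_afriatBudget_le u β γ lam hlam⟩

/-- The constructed budget `g(β) = max_t {γ̄_t + λ_t (u_t(β) − u_t(β_t))}`
rationalizes the data: `g(β_t) = γ̄_t` and `g(β) ≤ γ̄_t → u_t(β) ≤ u_t(β_t)`. -/
theorem stmt_1 {m K : ℕ}
    (u : Fin (K + 1) → (Fin m → ℝ) → ℝ) (β : Fin (K + 1) → Fin m → ℝ)
    (γ lam : Fin (K + 1) → ℝ)
    (hγ : ∀ t, 0 < γ t) (hlam : ∀ t, 0 < lam t)
    (hineq : ∀ s t, 0 ≤ γ s - γ t - lam t * (u t (β s) - u t (β t)))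
    (g : (Fin m → ℝ) → ℝ)
    (hg : ∀ x, g x = Finset.univ.sup' Finset.univ_nonempty
      (fun t => γ t + lam t * (u t x - u t (β t)))) :
    (∀ t, g (β t) = γ t) ∧
    (∀ t (x : Fin m → ℝ), g x ≤ γ t → u t x ≤ u t (β t)) :=
  stmt_1_general u β γ lam hlam hineq g hg
end

section
/- If each u_t is a utility maximizer's response data and the feasibility inequalities u_s − u_t − λ_t g_t(β_s) ≤ 0 hold for all s, t ∈ {1,…,K} with positive reals u_t, λ_t, then the function u(β) = min_t { u_t + λ_t g_t(β) } satisfies u(β_t) = u_t for every t, and for every t and every β with g_t(β) ≤ 0 one has u(β) ≤ u(β_t). -/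
/-- Afriat construction: `u(β) = min_t {u_t + λ_t g_t(β)}` satisfies
`u(β_t) = u_t` and rationalizes the data. -/
theorem stmt_5 {m K : ℕ}
    (g : Fin (K + 1) → (Fin m → ℝ) → ℝ) (β : Fin (K + 1) → Fin m → ℝ)
    (uscal lam : Fin (K + 1) → ℝ)
    (huscal : ∀ t, 0 < uscal t) (hlam : ∀ t, 0 < lam t)
    (hact : ∀ t, g t (β t) = 0)
    (hineq : ∀ s t, uscal s - uscal t - lam t * g t (β s) ≤ 0)
    (u : (Fin m → ℝ) → ℝ)
    (hu : ∀ x, u x = Finset.univ.inf' Finset.univ_nonempty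
      (fun t => uscal t + lam t * g t x)) :
    (∀ t, u (β t) = uscal t) ∧
    (∀ t (x : Fin m → ℝ), g t x ≤ 0 → u x ≤ u (β t)) := by
  have key : ∀ t, u (β t) = uscal t := by
    intro t
    rw [hu]
    apply le_antisymm
    · calc Finset.univ.inf' Finset.univ_nonempty (fun s => uscal s + lam s * g s (β t))
          ≤ uscal t + lam t * g t (β t) :=
            Finset.inf'_le _ (Finset.mem_univ t)
      _ = uscal t := by rw [hact t]; ring
    · apply Finset.le_inf'
      intro s _
      have := hineq t s
      linarith
  refine ⟨key, fun t x hx => ?_⟩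
  rw [key t, hu]
  calc Finset.univ.inf' Finset.univ_nonempty (fun s => uscal s + lam s * g s x)
      ≤ uscal t + lam t * g t x := Finset.inf'_le _ (Finset.mem_univ t)
    _ ≤ uscal t := by nlinarith [hlam t]
end
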